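/- arXiv:1108.1888 — 4 statements merged into one kernel-verified Lean document; each statement's English description precedes it below -/
import Mathlib

section
/- Let p be a polynomial with complex coefficients. Suppose that for every real number t the equation p(z) = i·t has exactly one solution z ∈ ℂ. Then p has degree exactly 1. -/
/-! If `p` had degree at least two, then for every purely imaginary `w` the polynomial `p - w`
would split as `c (X - z)ⁿ` with `n ≥ 2`, so its unique root `z` would also be a root of `p'`.
Distinct values `w` have distinct preimages `z`, so `p'` would have infinitely many roots and
vanish, forcing `p` to be constant. A constant cannot take both values `0` and `i`. -/

open Polynomial

namespace Polynomial

variable {K : Type*} [Field K] [IsAlgClosed K]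

theorem rootMultiplicity_eq_natDegree_of_forall_isRoot_eq {q : K[X]} {a : K}
    (h : ∀ x, q.IsRoot x → x = a) : q.rootMultiplicity a = q.natDegree := by
  classical
  rw [← count_roots, (IsAlgClosed.splits q).natDegree_eq_card_roots, Multiset.count_eq_card]
  exact fun x hx => (h x (isRoot_of_mem_roots hx)).symm

theorem isRoot_derivative_of_forall_isRoot_eq {q : K[X]} {a : K} (hq : 2 ≤ q.natDegree)
    (h : ∀ x, q.IsRoot x → x = a) : q.derivative.IsRoot a := by
  have hq0 : q ≠ 0 := by rintro rfl; simp at hq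
  refine ((one_lt_rootMultiplicity_iff_isRoot hq0).1 ?_).2
  rw [rootMultiplicity_eq_natDegree_of_forall_isRoot_eq h]
  omega

theorem natDegree_le_one_of_existsUnique_eval_eq [CharZero K] {p : K[X]} {S : Set K}
    (hS : S.Infinite) (h : ∀ w ∈ S, ∃! z, p.eval z = w) : p.natDegree ≤ 1 := by
  by_contra! hp
  have hroot : ∀ z ∈ {z | p.eval z ∈ S}, p.derivative.IsRoot z := by
    intro z hz
    have hq : 2 ≤ (p - C (p.eval z)).natDegree := by rwa [natDegree_sub_C]
    simpa using isRoot_derivative_of_forall_isRoot_eq hq fun x hx =>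
      (h _ hz).unique (by simpa [sub_eq_zero] using hx) rfl
  have hpreimage : {z | p.eval z ∈ S}.Infinite :=
    Set.Infinite.of_image (p.eval ·) <| hS.mono fun w hw => by
      obtain ⟨z, hz, -⟩ := h w hw
      exact ⟨z, by simpa [hz] using hw, hz⟩
  have hderiv : p.derivative = 0 := eq_zero_of_infinite_isRoot _ (hpreimage.mono hroot)
  have := derivative_eq_zero.mp hderiv
  omega

end Polynomial

/-- If a complex polynomial takes each purely imaginary value `i·t` (for `t : ℝ`)
exactly once, then it has degree exactly 1. -/
theorem polynomial_unique_imaginary_values_degree_one (p : Polynomial ℂ)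
    (huniq : ∀ t : ℝ, ∃! z : ℂ, p.eval z = Complex.I * t) :
    p.degree = 1 := by
  have hinj : Function.Injective fun t : ℝ => Complex.I * t := fun s t hst => by
    simpa using hst
  have hle : p.natDegree ≤ 1 :=
    natDegree_le_one_of_existsUnique_eval_eq (Set.infinite_range_of_injective hinj)
      (by rintro _ ⟨t, rfl⟩; exact huniq t)
  have hne : p.natDegree ≠ 0 := by
    rw [Ne, natDegree_eq_zero]
    rintro ⟨c, rfl⟩
    obtain ⟨_, h0, -⟩ := huniq 0
    obtain ⟨_, h1, -⟩ := huniq 1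
    simp only [eval_C] at h0 h1
    simp [h0] at h1
    exact Complex.I_ne_zero h1.symm
  have hp0 : p ≠ 0 := by rintro rfl; simp at hne
  rw [degree_eq_natDegree hp0, show p.natDegree = 1 by omega, Nat.cast_one]
end

section
/- Let g : ℝ → ℝ be differentiable at every point of (0, ∞), nonnegative on (0, ∞), bounded above on (0, ∞), and satisfy t·g'(t) ≥ g(t) for all t > 0. Then g(t) = 0 for all t > 0. -/
/-!
The hypothesis `t * g' t ≥ g t` says exactly that `g t / t` is nondecreasing on `(0, ∞)`.
So if `g t > 0` for some `t > 0`, then `g s ≥ (g t / t) * s` for all `s ≥ t`, and `g` grows at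
least linearly, contradicting boundedness.
-/

open Filter Set

theorem monotoneOn_div_self_of_mul_deriv_ge {g : ℝ → ℝ}
    (hdiff : ∀ t : ℝ, 0 < t → DifferentiableAt ℝ g t)
    (hineq : ∀ t : ℝ, 0 < t → g t ≤ t * deriv g t) :
    MonotoneOn (fun t => g t / t) (Ioi 0) := by
  have hderiv : ∀ t ∈ Ioi (0 : ℝ),
      HasDerivAt (fun t => g t / t) ((deriv g t * t - g t * 1) / t ^ 2) t := fun t ht =>
    (hdiff t ht).hasDerivAt.div (hasDerivAt_id t) (ne_of_gt ht)
  refine monotoneOn_of_deriv_nonneg (convex_Ioi 0)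
    (fun t ht => (hderiv t ht).continuousAt.continuousWithinAt)
    (fun t ht => (hderiv t (interior_subset ht)).differentiableAt.differentiableWithinAt)
    fun t ht => ?_
  rw [interior_Ioi] at ht
  rw [(hderiv t ht).deriv]
  have := hineq t ht
  exact div_nonneg (by linarith) (sq_nonneg t)

theorem tendsto_atTop_of_monotoneOn_div_self {g : ℝ → ℝ} {t : ℝ} (ht : 0 < t) (hgt : 0 < g t)
    (hmono : MonotoneOn (fun t => g t / t) (Ioi 0)) : Tendsto g atTop atTop := by
  have hlinear : ∀ᶠ s in atTop, g t / t * s ≤ g s := by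
    filter_upwards [eventually_ge_atTop t] with s hts
    have hs : 0 < s := ht.trans_le hts
    calc g t / t * s ≤ g s / s * s := mul_le_mul_of_nonneg_right (hmono ht hs hts) hs.le
      _ = g s := div_mul_cancel₀ _ hs.ne'
  exact tendsto_atTop_mono' _ hlinear (tendsto_id.const_mul_atTop (div_pos hgt ht))

/-- If `g` is differentiable on `(0, ∞)`, nonnegative and bounded above on `(0, ∞)`,
and satisfies `t * g'(t) ≥ g(t)` there, then `g` vanishes on `(0, ∞)`. -/
theorem eq_zero_of_bounded_nonneg_mul_deriv_ge (g : ℝ → ℝ)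
    (hdiff : ∀ t : ℝ, 0 < t → DifferentiableAt ℝ g t)
    (hnonneg : ∀ t : ℝ, 0 < t → 0 ≤ g t)
    (hbdd : BddAbove (g '' Set.Ioi (0 : ℝ)))
    (hineq : ∀ t : ℝ, 0 < t → t * deriv g t ≥ g t) :
    ∀ t : ℝ, 0 < t → g t = 0 := by
  intro t ht
  by_contra hne
  have hgt : 0 < g t := (hnonneg t ht).lt_of_ne' hne
  have htendsto := tendsto_atTop_of_monotoneOn_div_self ht hgt
    (monotoneOn_div_self_of_mul_deriv_ge hdiff hineq)
  obtain ⟨M, hM⟩ := hbdd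
  obtain ⟨s, hs, hMs⟩ :=
    ((eventually_gt_atTop 0).and (htendsto.eventually_gt_atTop M)).exists
  exact (hM (mem_image_of_mem g hs)).not_gt hMs
end

section
/- Let h : ℝ² → ℝ be a twice continuously differentiable function such that Δh(x) ≥ ‖∇h(x)‖ / ‖x‖ for every x ≠ 0, and such that Δh is integrable over ℝ² with respect to Lebesgue measure (note Δh ≥ 0 everywhere by the hypothesis and continuity). Then h is constant. -/
/-!
On the square `Q_R = [-R, R]²` the divergence theorem gives `∫_{Q_R} Δh = ∮_{∂Q_R} ∂_ν h`, and on
`∂Q_R` the hypothesis bounds `|∂_ν h| ≤ ‖∇h(x)‖ ≤ ‖x‖ Δh(x) ≤ √2 R Δh(x)`. Hence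
`∫_{Q_R} Δh ≤ √2 R ∫_{∂Q_R} Δh`. If `∫ Δh > 0`, the left side is bounded below for large `R`, so
`R ↦ ∫_{∂Q_R} Δh` is at least a multiple of `1 / R` and is not integrable at infinity; but by
Tonelli its integral over all `R` is at most `4 ∫ Δh < ∞`. So `∫ Δh = 0`, and as `Δh ≥ 0` is
continuous, `Δh = 0`. The hypothesis then forces `∇h = 0` away from the origin, hence everywhere.
-/

open MeasureTheory

/-- The Euclidean Laplacian of `h : ℝ² → ℝ`: the sum of the unmixed second
partial derivatives in the standard coordinate directions. -/
noncomputable def euclideanLaplacian (h : EuclideanSpace ℝ (Fin 2) → ℝ)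
    (x : EuclideanSpace ℝ (Fin 2)) : ℝ :=
  ∑ i : Fin 2,
    iteratedFDeriv ℝ 2 h x ![EuclideanSpace.single i (1 : ℝ), EuclideanSpace.single i (1 : ℝ)]

open Set Filter Topology
open scoped ENNReal

local notation "ℝ²" => EuclideanSpace ℝ (Fin 2)

noncomputable def squareBoundaryIntegral (F : ℝ × ℝ → ℝ) (R : ℝ) : ℝ :=
  (∫ x in -R..R, F (x, R)) + (∫ x in -R..R, F (x, -R)) + (∫ y in -R..R, F (R, y)) +
    ∫ y in -R..R, F (-R, y)

theorem Icc_neg_eq_closedBall (R : ℝ) :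
    Icc ((-R, -R) : ℝ × ℝ) (R, R) = Metric.closedBall 0 R := by
  rw [← Icc_prod_Icc, ← Prod.mk_zero_zero, ← closedBall_prod_same, Real.closedBall_eq_Icc]
  simp

theorem enorm_intervalIntegral_le_lintegral_enorm {E : Type*} [NormedAddCommGroup E]
    [NormedSpace ℝ E] (f : ℝ → E) (a b : ℝ) : ‖∫ x in a..b, f x‖ₑ ≤ ∫⁻ x, ‖f x‖ₑ :=
  calc ‖∫ x in a..b, f x‖ₑ = ‖∫ x in uIoc a b, f x‖ₑ := by
        simp only [← ofReal_norm, intervalIntegral.norm_integral_eq_norm_integral_uIoc]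
    _ ≤ ∫⁻ x in uIoc a b, ‖f x‖ₑ := enorm_integral_le_lintegral_enorm _
    _ ≤ ∫⁻ x, ‖f x‖ₑ := setLIntegral_le_lintegral _ _

theorem lintegral_enorm_squareBoundaryIntegral_le {F : ℝ × ℝ → ℝ} (hF : Measurable F) :
    ∫⁻ R, ‖squareBoundaryIntegral F R‖ₑ ≤ 4 * ∫⁻ p, ‖F p‖ₑ := by
  set row : ℝ → ℝ≥0∞ := fun y => ∫⁻ x, ‖F (x, y)‖ₑ
  set col : ℝ → ℝ≥0∞ := fun x => ∫⁻ y, ‖F (x, y)‖ₑ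
  have hrow : Measurable row := hF.enorm.lintegral_prod_left'
  have hcol : Measurable col := hF.enorm.lintegral_prod_right'
  have hneg (g : ℝ → ℝ≥0∞) : ∫⁻ R, g (-R) = ∫⁻ R, g R :=
    (Measure.measurePreserving_neg volume).lintegral_comp_emb
      (Homeomorph.neg ℝ).measurableEmbedding g
  have hrow_int : ∫⁻ y, row y = ∫⁻ p, ‖F p‖ₑ := by
    rw [Measure.volume_eq_prod, lintegral_prod_symm' _ hF.enorm]
  have hcol_int : ∫⁻ x, col x = ∫⁻ p, ‖F p‖ₑ := by
    rw [Measure.volume_eq_prod, lintegral_prod _ hF.enorm.aemeasurable]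
  calc ∫⁻ R, ‖squareBoundaryIntegral F R‖ₑ
      ≤ ∫⁻ R, (row R + row (-R) + col R + col (-R)) := by
        refine lintegral_mono fun R => ?_
        unfold squareBoundaryIntegral
        refine (enorm_add_le _ _).trans (add_le_add ((enorm_add_le _ _).trans (add_le_add
          ((enorm_add_le _ _).trans (add_le_add ?_ ?_)) ?_)) ?_) <;>
        exact enorm_intervalIntegral_le_lintegral_enorm _ _ _
    _ = 4 * ∫⁻ p, ‖F p‖ₑ := by
        rw [lintegral_add_left (f := fun R => row R + row (-R) + col R)
            ((hrow.add (hrow.comp measurable_neg)).add hcol),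
          lintegral_add_left (f := fun R => row R + row (-R)) (hrow.add (hrow.comp measurable_neg)),
          lintegral_add_left hrow, hneg row, hneg col, hrow_int, hcol_int]
        ring

theorem hasFiniteIntegral_squareBoundaryIntegral {F : ℝ × ℝ → ℝ} (hFm : Measurable F)
    (hF : HasFiniteIntegral F) : HasFiniteIntegral (squareBoundaryIntegral F) :=
  (lintegral_enorm_squareBoundaryIntegral_le hFm).trans_lt
    (ENNReal.mul_lt_top ENNReal.ofNat_lt_top hF)

theorem flux_le_squareBoundaryIntegral {u v w : ℝ × ℝ → ℝ} (hw : Continuous w) {R c : ℝ}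
    (hR : 0 ≤ R) (huv : ∀ p : ℝ × ℝ, ‖p‖ = R → |u p| ≤ c * w p ∧ |v p| ≤ c * w p) :
    (∫ x in -R..R, v (x, R)) - (∫ x in -R..R, v (x, -R)) + (∫ y in -R..R, u (R, y)) -
        ∫ y in -R..R, u (-R, y) ≤ c * squareBoundaryIntegral w R := by
  have hside (f g : ℝ → ℝ) (hg : Continuous g) (hfg : ∀ t ∈ Icc (-R) R, |f t| ≤ c * g t) :
      |∫ t in -R..R, f t| ≤ c * ∫ t in -R..R, g t := by
    rw [← intervalIntegral.integral_const_mul]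
    exact intervalIntegral.norm_integral_le_of_norm_le (g := fun t => c * g t) (by linarith)
      (ae_of_all _ fun t ht => (Real.norm_eq_abs _).trans_le (hfg t (Ioc_subset_Icc_self ht)))
      ((continuous_const.mul hg).intervalIntegrable _ _)
  have hnorm (t : ℝ) (ht : t ∈ Icc (-R) R) :
      ‖(t, R)‖ = R ∧ ‖(t, -R)‖ = R ∧ ‖(R, t)‖ = R ∧ ‖(-R, t)‖ = R := by
    have : |t| ≤ R := abs_le.2 ht
    simp [Prod.norm_def, abs_of_nonneg hR, this]
  have h₁ := hside (fun t => v (t, R)) (fun t => w (t, R)) (by fun_prop)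
    fun t ht => (huv _ (hnorm t ht).1).2
  have h₂ := hside (fun t => v (t, -R)) (fun t => w (t, -R)) (by fun_prop)
    fun t ht => (huv _ (hnorm t ht).2.1).2
  have h₃ := hside (fun t => u (R, t)) (fun t => w (R, t)) (by fun_prop)
    fun t ht => (huv _ (hnorm t ht).2.2.1).1
  have h₄ := hside (fun t => u (-R, t)) (fun t => w (-R, t)) (by fun_prop)
    fun t ht => (huv _ (hnorm t ht).2.2.2).1
  unfold squareBoundaryIntegral
  linarith [(abs_le.1 h₁).2, (abs_le.1 h₂).1, (abs_le.1 h₃).2, (abs_le.1 h₄).1]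

theorem integral_nonpos_of_setIntegral_square_le {F : ℝ × ℝ → ℝ} (hFm : Measurable F)
    (hFi : Integrable F) {a : ℝ} (ha : 0 < a)
    (hsq : ∀ R > 0, ∫ p in Icc (-R, -R) (R, R), F p ≤ a * R * squareBoundaryIntegral F R) :
    ∫ p, F p ≤ 0 := by
  by_contra! hpos
  set c := ∫ p, F p
  simp only [Icc_neg_eq_closedBall] at hsq
  have hcover : ⋃ R : ℝ, Metric.closedBall (0 : ℝ × ℝ) R = univ :=
    eq_univ_of_forall fun p => mem_iUnion.2 ⟨‖p‖, by simp⟩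
  have hlim : Tendsto (fun R : ℝ => ∫ p in Metric.closedBall 0 R, F p) atTop (𝓝 c) := by
    have := tendsto_setIntegral_of_monotone (fun R : ℝ => Metric.isClosed_closedBall.measurableSet)
      (fun R S hRS => Metric.closedBall_subset_closedBall hRS)
      (by rw [hcover]; exact hFi.integrableOn)
    rwa [hcover, setIntegral_univ] at this
  obtain ⟨R₀, hR₀⟩ := eventually_atTop.1 (hlim.eventually (lt_mem_nhds (half_lt_self hpos)))
  have hlow : ∀ R ∈ Ioi (max R₀ 1), c / (2 * a) * R⁻¹ ≤ squareBoundaryIntegral F R := by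
    intro R hR
    have hRpos : 0 < R := (lt_max_of_lt_right one_pos).trans hR
    have := (hR₀ R (le_max_left _ _ |>.trans hR.le)).le.trans (hsq R hRpos)
    rw [show c / (2 * a) * R⁻¹ = c / 2 / (a * R) by field_simp, div_le_iff₀ (by positivity)]
    linarith
  have hint : IntegrableOn (fun R : ℝ => c / (2 * a) * R⁻¹) (Ioi (max R₀ 1)) := by
    refine ⟨(measurable_const.mul measurable_inv).aestronglyMeasurable, ?_⟩
    refine (hasFiniteIntegral_squareBoundaryIntegral hFm hFi.2).mono_measure
      Measure.restrict_le_self |>.mono ?_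
    filter_upwards [self_mem_ae_restrict measurableSet_Ioi] with R hR
    have hRpos : 0 < R := (lt_max_of_lt_right one_pos).trans hR
    simp only [Real.norm_eq_abs]
    exact abs_le_abs_of_nonneg (by positivity) (hlow R hR)
  refine not_integrableOn_Ioi_inv (IntegrableOn.congr_fun (hint.const_mul (c / (2 * a))⁻¹)
    (fun R _ => ?_) measurableSet_Ioi)
  field_simp

theorem Continuous.eq_zero_of_integral_nonpos {X : Type*} [TopologicalSpace X]
    [MeasurableSpace X] [OpensMeasurableSpace X] {μ : Measure X} [μ.IsOpenPosMeasure]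
    {f : X → ℝ} (hf : Continuous f) (hf0 : 0 ≤ f) (hfi : Integrable f μ) (h : ∫ x, f x ∂μ ≤ 0) :
    f = 0 :=
  (hf.ae_eq_iff_eq μ continuous_const).1 <|
    (integral_eq_zero_iff_of_nonneg hf0 hfi).1 (h.antisymm (integral_nonneg hf0))

theorem norm_gradient_eq_norm_fderiv {F : Type*} [NormedAddCommGroup F] [InnerProductSpace ℝ F]
    [CompleteSpace F] (f : F → ℝ) (x : F) : ‖gradient f x‖ = ‖fderiv ℝ f x‖ :=
  (InnerProductSpace.toDual ℝ F).symm.norm_map _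

noncomputable def prodEquivEuclidean : (ℝ × ℝ) ≃L[ℝ] ℝ² :=
  (ContinuousLinearEquiv.finTwoArrow ℝ ℝ).symm.trans (EuclideanSpace.equiv (Fin 2) ℝ).symm

theorem prodEquivEuclidean_apply (p : ℝ × ℝ) : prodEquivEuclidean p = !₂[p.1, p.2] := rfl

theorem prodEquivEuclidean_one_zero : prodEquivEuclidean (1, 0) = EuclideanSpace.single 0 1 := by
  ext i; fin_cases i <;> simp [prodEquivEuclidean_apply]

theorem prodEquivEuclidean_zero_one : prodEquivEuclidean (0, 1) = EuclideanSpace.single 1 1 := by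
  ext i; fin_cases i <;> simp [prodEquivEuclidean_apply]

theorem measurePreserving_prodEquivEuclidean : MeasurePreserving prodEquivEuclidean :=
  (EuclideanSpace.volume_preserving_symm_measurableEquiv_toLp (Fin 2)).symm.comp
    (volume_preserving_finTwoArrow ℝ).symm

theorem norm_prodEquivEuclidean_le (p : ℝ × ℝ) : ‖prodEquivEuclidean p‖ ≤ √2 * ‖p‖ := by
  rw [EuclideanSpace.norm_eq, Fin.sum_univ_two, ← Real.sqrt_sq (norm_nonneg p),
    ← Real.sqrt_mul zero_le_two]
  refine Real.sqrt_le_sqrt ?_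
  simp only [prodEquivEuclidean_apply, Prod.norm_def, Real.norm_eq_abs, Matrix.cons_val_zero,
    Matrix.cons_val_one]
  have h₁ := pow_le_pow_left₀ (abs_nonneg p.1) (le_max_left |p.1| |p.2|) 2
  have h₂ := pow_le_pow_left₀ (abs_nonneg p.2) (le_max_right |p.1| |p.2|) 2
  linarith [sq_abs p.1, sq_abs p.2]

section Laplacian

variable {h : ℝ² → ℝ}

noncomputable def coordDeriv (h : ℝ² → ℝ) (i : Fin 2) (p : ℝ × ℝ) : ℝ :=
  fderiv ℝ h (prodEquivEuclidean p) (EuclideanSpace.single i 1)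

theorem continuous_coordDeriv (hh : ContDiff ℝ 1 h) (i : Fin 2) : Continuous (coordDeriv h i) :=
  ((hh.continuous_fderiv one_ne_zero).comp prodEquivEuclidean.continuous).clm_apply continuous_const

theorem hasFDerivAt_coordDeriv (hh : ContDiff ℝ 2 h) (i : Fin 2) (p : ℝ × ℝ) :
    HasFDerivAt (coordDeriv h i)
      (((ContinuousLinearMap.apply ℝ ℝ (EuclideanSpace.single i 1)).comp
        (fderiv ℝ (fderiv ℝ h) (prodEquivEuclidean p))).comp
          (prodEquivEuclidean : (ℝ × ℝ) →L[ℝ] ℝ²)) p := by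
  have hD : HasFDerivAt (fderiv ℝ h) (fderiv ℝ (fderiv ℝ h) (prodEquivEuclidean p))
      (prodEquivEuclidean p) :=
    ((hh.fderiv_right (m := 1) le_rfl).differentiable one_ne_zero _).hasFDerivAt
  exact (ContinuousLinearMap.apply ℝ ℝ _).hasFDerivAt.comp p
    (hD.comp p prodEquivEuclidean.hasFDerivAt)

theorem euclideanLaplacian_eq (z : ℝ²) :
    euclideanLaplacian h z =
      fderiv ℝ (fderiv ℝ h) z (EuclideanSpace.single 0 1) (EuclideanSpace.single 0 1) +
        fderiv ℝ (fderiv ℝ h) z (EuclideanSpace.single 1 1) (EuclideanSpace.single 1 1) := by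
  simp [euclideanLaplacian, Fin.sum_univ_two, iteratedFDeriv_two_apply]

theorem continuous_euclideanLaplacian (hh : ContDiff ℝ 2 h) :
    Continuous (euclideanLaplacian h) := by
  have hD : Continuous (fderiv ℝ (fderiv ℝ h)) :=
    (hh.fderiv_right (m := 1) le_rfl).continuous_fderiv one_ne_zero
  simp only [funext euclideanLaplacian_eq]
  fun_prop

theorem setIntegral_euclideanLaplacian_Icc (hh : ContDiff ℝ 2 h) {a b : ℝ × ℝ} (hab : a ≤ b) :
    ∫ p in Icc a b, euclideanLaplacian h (prodEquivEuclidean p) =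
      (((∫ x in a.1..b.1, coordDeriv h 1 (x, b.2)) - ∫ x in a.1..b.1, coordDeriv h 1 (x, a.2)) +
          ∫ y in a.2..b.2, coordDeriv h 0 (b.1, y)) - ∫ y in a.2..b.2, coordDeriv h 0 (a.1, y) := by
  have hdiv : ∀ p, euclideanLaplacian h (prodEquivEuclidean p) =
      fderiv ℝ (coordDeriv h 0) p (1, 0) + fderiv ℝ (coordDeriv h 1) p (0, 1) := fun p => by
    simp only [(hasFDerivAt_coordDeriv hh _ p).fderiv, ContinuousLinearMap.comp_apply,
      ContinuousLinearEquiv.coe_coe, prodEquivEuclidean_one_zero, prodEquivEuclidean_zero_one,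
      ContinuousLinearMap.apply_apply, euclideanLaplacian_eq]
  simp only [hdiv]
  exact integral_divergence_prod_Icc_of_hasFDerivAt_of_le _ _ _ _ a b hab
    (continuous_coordDeriv (hh.of_le one_le_two) 0).continuousOn
    (continuous_coordDeriv (hh.of_le one_le_two) 1).continuousOn
    (fun p _ => (hasFDerivAt_coordDeriv hh 0 p).differentiableAt.hasFDerivAt)
    (fun p _ => (hasFDerivAt_coordDeriv hh 1 p).differentiableAt.hasFDerivAt)
    (by simp only [← hdiv]; exact ((continuous_euclideanLaplacian hh).comp
      prodEquivEuclidean.continuous).integrableOn_Icc)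

theorem norm_fderiv_le_norm_mul_euclideanLaplacian
    (hineq : ∀ x : ℝ², x ≠ 0 → euclideanLaplacian h x ≥ ‖gradient h x‖ / ‖x‖) {z : ℝ²}
    (hz : z ≠ 0) : ‖fderiv ℝ h z‖ ≤ ‖z‖ * euclideanLaplacian h z := by
  rw [← norm_gradient_eq_norm_fderiv, ← div_le_iff₀' (norm_pos_iff.2 hz)]
  exact hineq z hz

theorem euclideanLaplacian_nonneg (hh : ContDiff ℝ 2 h)
    (hineq : ∀ x : ℝ², x ≠ 0 → euclideanLaplacian h x ≥ ‖gradient h x‖ / ‖x‖) (z : ℝ²) :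
    0 ≤ euclideanLaplacian h z := by
  have hclosed : IsClosed {w | 0 ≤ euclideanLaplacian h w} :=
    isClosed_le continuous_const (continuous_euclideanLaplacian hh)
  refine hclosed.closure_subset_iff.2 (fun w hw => ?_) (dense_compl_singleton 0 z)
  exact (div_nonneg (norm_nonneg _) (norm_nonneg _)).trans (hineq w hw)

theorem setIntegral_euclideanLaplacian_square_le (hh : ContDiff ℝ 2 h)
    (hineq : ∀ x : ℝ², x ≠ 0 → euclideanLaplacian h x ≥ ‖gradient h x‖ / ‖x‖) {R : ℝ}
    (hR : 0 < R) :
    ∫ p in Icc (-R, -R) (R, R), euclideanLaplacian h (prodEquivEuclidean p) ≤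
      √2 * R * squareBoundaryIntegral (fun p => euclideanLaplacian h (prodEquivEuclidean p)) R := by
  rw [setIntegral_euclideanLaplacian_Icc hh (by simp [Prod.mk_le_mk, hR.le])]
  refine flux_le_squareBoundaryIntegral
    ((continuous_euclideanLaplacian hh).comp prodEquivEuclidean.continuous) hR.le
    fun p hp => ?_
  set z := prodEquivEuclidean p
  have hz : z ≠ 0 := prodEquivEuclidean.map_ne_zero_iff.2 (norm_pos_iff.1 (by rw [hp]; exact hR))
  have hbound (i : Fin 2) : |coordDeriv h i p| ≤ √2 * R * euclideanLaplacian h z :=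
    calc |coordDeriv h i p| ≤ ‖fderiv ℝ h z‖ := by
          simpa [coordDeriv] using (fderiv ℝ h z).le_opNorm (EuclideanSpace.single i 1)
      _ ≤ ‖z‖ * euclideanLaplacian h z := norm_fderiv_le_norm_mul_euclideanLaplacian hineq hz
      _ ≤ √2 * R * euclideanLaplacian h z := by
          gcongr
          · exact euclideanLaplacian_nonneg hh hineq z
          · exact (norm_prodEquivEuclidean_le p).trans_eq (by rw [hp])
  exact ⟨hbound 0, hbound 1⟩

theorem eq_of_euclideanLaplacian_eq_zero (hh : ContDiff ℝ 1 h)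
    (hineq : ∀ x : ℝ², x ≠ 0 → euclideanLaplacian h x ≥ ‖gradient h x‖ / ‖x‖)
    (hΔ : ∀ z, euclideanLaplacian h z = 0) (x y : ℝ²) : h x = h y := by
  have hD : ∀ z ∈ ({0}ᶜ : Set ℝ²), fderiv ℝ h z = 0 := fun z hz => by
    simpa [hΔ] using norm_fderiv_le_norm_mul_euclideanLaplacian hineq hz
  exact is_const_of_fderiv_eq_zero (hh.differentiable one_ne_zero)
    (fun z => congrFun (Continuous.ext_on (dense_compl_singleton 0)
      (hh.continuous_fderiv one_ne_zero) continuous_const hD) z) x y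

end Laplacian

/-- If `h : ℝ² → ℝ` is `C²`, satisfies `Δh(x) ≥ ‖∇h(x)‖ / ‖x‖` for every `x ≠ 0`,
and `Δh` is Lebesgue integrable on `ℝ²`, then `h` is constant. -/
theorem constant_of_laplacian_ge_grad_div_norm (h : EuclideanSpace ℝ (Fin 2) → ℝ)
    (hsmooth : ContDiff ℝ 2 h)
    (hineq : ∀ x : EuclideanSpace ℝ (Fin 2), x ≠ 0 →
      euclideanLaplacian h x ≥ ‖gradient h x‖ / ‖x‖)
    (hint : Integrable (euclideanLaplacian h) volume) :
    ∀ x y : EuclideanSpace ℝ (Fin 2), h x = h y := by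
  set F : ℝ × ℝ → ℝ := fun p => euclideanLaplacian h (prodEquivEuclidean p)
  have hF : Continuous F :=
    (continuous_euclideanLaplacian hsmooth).comp prodEquivEuclidean.continuous
  have hFi : Integrable F :=
    (measurePreserving_prodEquivEuclidean.integrable_comp_emb
      prodEquivEuclidean.toHomeomorph.measurableEmbedding).2 hint
  have hF_nonpos : ∫ p, F p ≤ 0 :=
    integral_nonpos_of_setIntegral_square_le hF.measurable hFi (Real.sqrt_pos.2 two_pos)
      fun R hR => setIntegral_euclideanLaplacian_square_le hsmooth hineq hR
  have hF_zero : F = 0 :=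
    hF.eq_zero_of_integral_nonpos (fun p => euclideanLaplacian_nonneg hsmooth hineq _) hFi
      hF_nonpos
  refine eq_of_euclideanLaplacian_eq_zero (hsmooth.of_le one_le_two) hineq fun z => ?_
  simpa [F] using congrFun hF_zero (prodEquivEuclidean.symm z)
end

section
/- Let h : ℝ² → ℝ be a twice continuously differentiable function and let t > 0. Then the integral of Δh over the closed Euclidean ball of radius t centered at the origin (with respect to Lebesgue measure) is at most the integral of ‖∇h‖ over the Euclidean circle of radius t centered at the origin (with respect to the one-dimensional Hausdorff measure on the circle). -/
open MeasureTheory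

/-!
Identify `ℝ²` with `ℂ` by a linear isometry, which transports Lebesgue measure, `μH[1]`, the
Laplacian and `‖∇h‖`, and write `z = r e^{iθ}`. The fluxes `F = r ∂ᵣf` and
`G = r⁻¹ ∂_θ f = Df(z)(i e^{iθ})` are `C¹` on the closed rectangle `[0, t] × [-π, π]` and satisfy
`r Δf = ∂ᵣF + ∂_θ G`. As `r` is the Jacobian of polar coordinates, the divergence theorem on the
rectangle gives `∫_{B_t} Δf = ∫_{-π}^{π} t ∂ᵣf(t e^{iθ}) dθ`, because `G` is `2π`-periodic in `θ`
and `F` vanishes at `r = 0`. Finally `∂ᵣf ≤ ‖Df‖`, and since on the circle of radius `t` the chord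
over a small angle `u` is at least `c u` for any `c < t`, the push-forward of `t dθ` on `(-π, π]`
is at most `μH[1]` on the circle.
-/

open Set Metric Real Function Complex InnerProductSpace
open scoped ENNReal NNReal Laplacian

section CurveHausdorff

variable {X : Type*} [MetricSpace X] [MeasurableSpace X] [BorelSpace X]

theorem ofReal_mul_volume_le_hausdorffMeasure_image {γ : ℝ → X} {c : ℝ} {s : Set ℝ}
    (hγ : ∀ x ∈ s, ∀ y ∈ s, c * dist x y ≤ dist (γ x) (γ y)) :
    ENNReal.ofReal c * volume s ≤ μH[1] (γ '' s) := by
  rcases le_or_gt c 0 with hc | hc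
  · simp [ENNReal.ofReal_of_nonpos hc]
  lift c to ℝ≥0 using hc.le
  have hc' : c ≠ 0 := by exact_mod_cast hc.ne'
  have hanti : AntilipschitzWith c⁻¹ (s.domRestrict γ) :=
    AntilipschitzWith.of_le_mul_dist fun x y => by
      rw [NNReal.coe_inv, le_inv_mul_iff₀ hc]
      exact hγ x x.2 y y.2
  have hvol : μH[1] (univ : Set s) = volume s := by
    rw [← (isometry_subtype_coe (s := s)).hausdorffMeasure_image (Or.inl zero_le_one),
      image_univ, Subtype.range_coe, hausdorffMeasure_real]
  have hle := hanti.le_hausdorffMeasure_image zero_le_one univ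
  rw [hvol, image_univ, range_domRestrict, ENNReal.rpow_one, ENNReal.coe_inv hc'] at hle
  calc ENNReal.ofReal c * volume s ≤ c * ((c : ℝ≥0∞)⁻¹ * μH[1] (γ '' s)) := by
        rw [ENNReal.ofReal_coe_nnreal]; gcongr
    _ = μH[1] (γ '' s) := by
        rw [← mul_assoc, ENNReal.mul_inv_cancel (by exact_mod_cast hc') ENNReal.coe_ne_top,
          one_mul]

/-- Cut `s` into pieces of length `δ`: their images are disjoint by injectivity and measurable by
the Lusin–Souslin theorem, so `μH[1]` adds up over them. -/
theorem ofReal_mul_volume_le_hausdorffMeasure_image_of_local {γ : ℝ → X} {c δ : ℝ} {s : Set ℝ}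
    (hδ : 0 < δ) (hs : MeasurableSet s) (hγc : ContinuousOn γ s) (hγi : InjOn γ s)
    (hγ : ∀ x ∈ s, ∀ y ∈ s, dist x y ≤ δ → c * dist x y ≤ dist (γ x) (γ y)) :
    ENNReal.ofReal c * volume s ≤ μH[1] (γ '' s) := by
  set piece : ℤ → Set ℝ := fun n => s ∩ Ioc (n • δ) ((n + 1) • δ)
  have hunion : ⋃ n, piece n = s := by
    rw [← inter_iUnion, iUnion_Ioc_zsmul hδ, inter_univ]
  have hdisj : Pairwise (Disjoint on piece) := fun m n hmn =>
    ((pairwise_disjoint_Ioc_zsmul δ) hmn).mono inter_subset_right inter_subset_right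
  have hmeas : ∀ n, MeasurableSet (piece n) := fun n => hs.inter measurableSet_Ioc
  have hpiece : ∀ n, ENNReal.ofReal c * volume (piece n) ≤ μH[1] (γ '' piece n) := by
    refine fun n => ofReal_mul_volume_le_hausdorffMeasure_image fun x hx y hy =>
      hγ x hx.1 y hy.1 ?_
    obtain ⟨-, hx₁, hx₂⟩ := hx
    obtain ⟨-, hy₁, hy₂⟩ := hy
    rw [add_smul, one_smul] at hx₂ hy₂
    rw [Real.dist_eq, abs_le]
    constructor <;> linarith
  calc ENNReal.ofReal c * volume s = ∑' n, ENNReal.ofReal c * volume (piece n) := by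
        rw [← hunion, measure_iUnion hdisj hmeas, ENNReal.tsum_mul_left]
    _ ≤ ∑' n, μH[1] (γ '' piece n) := ENNReal.tsum_le_tsum hpiece
    _ = μH[1] (γ '' s) := by
        rw [← measure_iUnion, ← image_iUnion, hunion]
        · exact fun m n hmn => (hdisj hmn).image hγi inter_subset_left inter_subset_left
        · exact fun n => (hmeas n).image_of_continuousOn_injOn (hγc.mono inter_subset_left)
            (hγi.mono inter_subset_left)

theorem smul_map_volume_restrict_le_hausdorffMeasure {γ : ℝ → X} {K : ℝ} {s : Set ℝ}
    (hs : MeasurableSet s) (hγc : Continuous γ) (hγi : InjOn γ s)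
    (hγ : ∀ c < K, ∃ δ > 0, ∀ x ∈ s, ∀ y ∈ s, dist x y ≤ δ → c * dist x y ≤ dist (γ x) (γ y)) :
    ENNReal.ofReal K • (volume.restrict s).map γ ≤ μH[1].restrict (γ '' s) := by
  rw [Measure.le_iff]
  intro A hA
  have hA' : MeasurableSet (γ ⁻¹' A ∩ s) := (hγc.measurable hA).inter hs
  rw [Measure.smul_apply, Measure.map_apply hγc.measurable hA,
    Measure.restrict_apply (hγc.measurable hA), Measure.restrict_apply hA, smul_eq_mul,
    inter_comm A, ← image_inter_preimage, inter_comm s]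
  refine ENNReal.le_of_forall_lt_one_mul_le fun a ha => ?_
  rcases le_or_gt K 0 with hK | hK
  · simp [ENNReal.ofReal_of_nonpos hK]
  have ha' : a.toReal < 1 := ENNReal.toReal_lt_of_lt_ofReal (by simpa using ha)
  obtain ⟨δ, hδ, hloc⟩ := hγ (a.toReal * K) (mul_lt_of_lt_one_left hK ha')
  calc a * (ENNReal.ofReal K * volume (γ ⁻¹' A ∩ s))
      = ENNReal.ofReal (a.toReal * K) * volume (γ ⁻¹' A ∩ s) := by
        rw [ENNReal.ofReal_mul ENNReal.toReal_nonneg, ENNReal.ofReal_toReal ha.ne_top, mul_assoc]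
    _ ≤ μH[1] (γ '' (γ ⁻¹' A ∩ s)) :=
        ofReal_mul_volume_le_hausdorffMeasure_image_of_local hδ hA' hγc.continuousOn
          (hγi.mono inter_subset_right) fun x hx y hy => hloc x hx.2 y hy.2

end CurveHausdorff

theorem one_sub_mul_abs_le_abs_two_mul_sin_half {u δ : ℝ} (hδ : δ ≤ 1) (hu : |u| ≤ δ) :
    (1 - δ) * |u| ≤ |2 * Real.sin (u / 2)| := by
  have hcube := sin_ge_sub_cube (x := |u| / 2) (by positivity)
  have hsin : Real.sin (|u| / 2) ≤ |Real.sin (u / 2)| := by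
    rcases abs_cases u with ⟨hu', -⟩ | ⟨hu', -⟩ <;> rw [hu']
    · exact le_abs_self _
    · rw [neg_div, Real.sin_neg]
      exact neg_le_abs _
  have hsq : |u| ^ 2 ≤ δ := by nlinarith [abs_nonneg u]
  rw [abs_mul, abs_two]
  nlinarith [mul_le_mul_of_nonneg_left hsq (abs_nonneg u),
    mul_nonneg (abs_nonneg u) ((abs_nonneg u).trans hu)]

theorem dist_circleMap_circleMap (z : ℂ) (R x y : ℝ) :
    dist (circleMap z R x) (circleMap z R y) = |R| * |2 * Real.sin ((x - y) / 2)| := by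
  have : circleMap z R x - circleMap z R y = circleMap 0 R y * (exp (I * ↑(x - y)) - 1) := by
    simp only [circleMap, zero_add, ofReal_sub, mul_sub, mul_one]
    rw [mul_assoc, ← Complex.exp_add]
    ring_nf
  rw [dist_eq_norm, this, norm_mul, norm_circleMap_zero, norm_exp_I_mul_ofReal_sub_one,
    Real.norm_eq_abs]

theorem exists_mul_dist_le_dist_circleMap (z : ℂ) {R c : ℝ} (hR : 0 < R) (hc : c < R) :
    ∃ δ > 0, ∀ x y : ℝ, dist x y ≤ δ →
      c * dist x y ≤ dist (circleMap z R x) (circleMap z R y) := by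
  set δ := min 1 (1 - c / R)
  have hcδ : c ≤ R * (1 - δ) := by
    have := min_le_right 1 (1 - c / R)
    rw [mul_sub, mul_one]
    nlinarith [mul_div_cancel₀ c hR.ne']
  refine ⟨δ, lt_min one_pos (by rwa [sub_pos, div_lt_one hR]), fun x y hxy => ?_⟩
  rw [dist_circleMap_circleMap, abs_of_pos hR, Real.dist_eq]
  calc c * |x - y| ≤ R * ((1 - δ) * |x - y|) := by rw [← mul_assoc]; gcongr
    _ ≤ R * |2 * Real.sin ((x - y) / 2)| :=
        mul_le_mul_of_nonneg_left
          (one_sub_mul_abs_le_abs_two_mul_sin_half (min_le_left _ _) hxy) hR.le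

theorem smul_map_circleMap_le_hausdorffMeasure_sphere (z : ℂ) {R : ℝ} (hR : 0 < R) :
    ENNReal.ofReal R • (volume.restrict (Ioc (-π) π)).map (circleMap z R) ≤
      μH[1].restrict (sphere z R) := by
  have hinj : InjOn (circleMap z R) (Ioc (-π) π) := by
    simpa [uIoc_of_le (neg_le_self pi_pos.le)] using
      injOn_circleMap_of_abs_sub_le (c := z) (a := -π) (b := π) hR.ne'
        (by rw [abs_of_nonpos] <;> linarith [pi_pos])
  refine (smul_map_volume_restrict_le_hausdorffMeasure measurableSet_Ioc
    (continuous_circleMap z R) hinj fun c hc => ?_).trans (Measure.restrict_mono ?_ le_rfl)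
  · obtain ⟨δ, hδ, h⟩ := exists_mul_dist_le_dist_circleMap z hR hc
    exact ⟨δ, hδ, fun x _ y _ => h x y⟩
  · rintro _ ⟨θ, -, rfl⟩
    exact circleMap_mem_sphere z hR.le θ

theorem hausdorffMeasure_sphere_lt_top (z : ℂ) (R : ℝ) : μH[1] (sphere z R) < ∞ := by
  rcases lt_or_ge R 0 with hR | hR
  · simp [sphere_eq_empty_of_neg hR]
  calc μH[1] (sphere z R) = μH[1] (circleMap z R '' Ioc 0 (2 * π)) := by
        rw [image_circleMap_Ioc, abs_of_nonneg hR]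
    _ ≤ (Real.nnabs R : ℝ≥0∞) ^ (1 : ℝ) * μH[1] (Ioc 0 (2 * π)) :=
        (lipschitzWith_circleMap z R).hausdorffMeasure_image_le zero_le_one _
    _ < ∞ := by
        rw [hausdorffMeasure_real, Real.volume_Ioc, ENNReal.rpow_one]
        exact ENNReal.mul_lt_top ENNReal.coe_lt_top ENNReal.ofReal_lt_top

theorem mul_integral_comp_circleMap_le_integral_sphere (z : ℂ) {R : ℝ} (hR : 0 < R)
    {g : ℂ → ℝ} (hg : Continuous g) (hg₀ : 0 ≤ g) :
    R * ∫ θ in Ioc (-π) π, g (circleMap z R θ) ≤ ∫ w in sphere z R, g w ∂μH[1] := by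
  have hint : IntegrableOn g (sphere z R) μH[1] := by
    obtain ⟨C, hC⟩ := (isCompact_sphere z R).exists_bound_of_continuousOn hg.continuousOn
    exact Measure.integrableOn_of_bounded (hausdorffMeasure_sphere_lt_top z R).ne
      hg.aestronglyMeasurable ((ae_restrict_iff' isClosed_sphere.measurableSet).2 (ae_of_all _ hC))
  calc R * ∫ θ in Ioc (-π) π, g (circleMap z R θ)
      = ∫ w, g w ∂(ENNReal.ofReal R • (volume.restrict (Ioc (-π) π)).map (circleMap z R)) := by
        rw [integral_smul_measure, integral_map (continuous_circleMap z R).aemeasurable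
          hg.aestronglyMeasurable, ENNReal.toReal_ofReal hR.le, smul_eq_mul]
    _ ≤ ∫ w in sphere z R, g w ∂μH[1] :=
        integral_mono_measure (smul_map_circleMap_le_hausdorffMeasure_sphere z hR)
          (ae_of_all _ hg₀) hint

theorem Complex.polarCoord_symm_eq_circleMap (p : ℝ × ℝ) :
    Complex.polarCoord.symm p = circleMap 0 p.1 p.2 := by
  rw [Complex.polarCoord_symm_apply, circleMap_zero, exp_mul_I, ← ofReal_cos, ← ofReal_sin]

theorem integral_closedBall_eq_integral_Icc_circleMap {E : Type*} [NormedAddCommGroup E]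
    [NormedSpace ℝ E] (g : ℂ → E) (t : ℝ) :
    ∫ z in closedBall (0 : ℂ) t, g z =
      ∫ p in Icc (0, -π) (t, π), p.1 • g (circleMap 0 p.1 p.2) := by
  have hball : ∀ p ∈ polarCoord.target,
      (closedBall (0 : ℂ) t).indicator g (Complex.polarCoord.symm p) =
        (Iic t ×ˢ univ).indicator (fun p : ℝ × ℝ => g (circleMap 0 p.1 p.2)) p := by
    rintro ⟨r, θ⟩ ⟨hr, -⟩
    rw [Complex.polarCoord_symm_eq_circleMap]
    have hmem : circleMap 0 r θ ∈ closedBall 0 t ↔ (r, θ) ∈ Iic t ×ˢ (univ : Set ℝ) := by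
      simp [norm_circleMap_zero, abs_of_pos (show 0 < r from hr)]
    by_cases h : (r, θ) ∈ Iic t ×ˢ (univ : Set ℝ)
    · rw [indicator_of_mem (hmem.2 h), indicator_of_mem h]
    · rw [indicator_of_notMem (mt hmem.1 h), indicator_of_notMem h]
  rw [← integral_indicator measurableSet_closedBall, ← Complex.integral_comp_polarCoord_symm,
    setIntegral_congr_fun polarCoord.open_target.measurableSet
      (fun p hp => by rw [hball p hp, ← indicator_smul_apply]),
    setIntegral_indicator (measurableSet_Iic.prod MeasurableSet.univ), polarCoord_target,
    prod_inter_prod, Ioi_inter_Iic, inter_univ, Icc_prod_eq]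
  refine setIntegral_congr_set ?_
  rw [Measure.volume_eq_prod]
  exact Measure.set_prod_ae_eq Ioc_ae_eq_Icc Ioo_ae_eq_Icc

theorem contDiff_circleMap_uncurry (c : ℂ) {n : WithTop ℕ∞} :
    ContDiff ℝ n fun p : ℝ × ℝ => circleMap c p.1 p.2 := by
  have hr : ContDiff ℝ n fun p : ℝ × ℝ => (p.1 : ℂ) := ofRealCLM.contDiff.comp contDiff_fst
  have hθ : ContDiff ℝ n fun p : ℝ × ℝ => (p.2 : ℂ) := ofRealCLM.contDiff.comp contDiff_snd
  exact contDiff_const.add (hr.mul (hθ.mul contDiff_const).cexp)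

theorem hasDerivAt_circleMap_radius (c : ℂ) (r θ : ℝ) :
    HasDerivAt (fun r => circleMap c r θ) (circleMap 0 1 θ) r := by
  simpa [circleMap] using ((hasDerivAt_id r).ofReal_comp.mul_const (exp (θ * I))).const_add c

theorem fderiv_apply_one_zero {E : Type*} [NormedAddCommGroup E] [NormedSpace ℝ E]
    {g : ℝ × ℝ → E} {p : ℝ × ℝ} {e : E} (hg : DifferentiableAt ℝ g p)
    (h : HasDerivAt (fun r => g (r, p.2)) e p.1) : fderiv ℝ g p (1, 0) = e :=
  (hg.hasFDerivAt.comp_hasDerivAt (x := p.1) (f := fun r => (r, p.2))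
    ((hasDerivAt_id _).prodMk (hasDerivAt_const _ _))).unique h

theorem fderiv_apply_zero_one {E : Type*} [NormedAddCommGroup E] [NormedSpace ℝ E]
    {g : ℝ × ℝ → E} {p : ℝ × ℝ} {e : E} (hg : DifferentiableAt ℝ g p)
    (h : HasDerivAt (fun θ => g (p.1, θ)) e p.2) : fderiv ℝ g p (0, 1) = e :=
  (hg.hasFDerivAt.comp_hasDerivAt (x := p.2) (f := fun θ => (p.1, θ))
    ((hasDerivAt_const _ _).prodMk (hasDerivAt_id _))).unique h

theorem laplacian_eq_fderiv_fderiv_rotation {F : Type*} [NormedAddCommGroup F]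
    [NormedSpace ℝ F] (f : ℂ → F) (a : Circle) (z : ℂ) :
    Δ f z = fderiv ℝ (fderiv ℝ f) z a a + fderiv ℝ (fderiv ℝ f) z (a * I) (a * I) := by
  rw [laplacian_eq_iteratedFDeriv_orthonormalBasis f
    (Complex.orthonormalBasisOneI.map (rotation a))]
  simp [iteratedFDeriv_two_apply, rotation_apply]

theorem laplacian_comp_linearIsometryEquiv {E E' F : Type*} [NormedAddCommGroup E]
    [InnerProductSpace ℝ E] [FiniteDimensional ℝ E] [NormedAddCommGroup E']
    [InnerProductSpace ℝ E'] [FiniteDimensional ℝ E'] [NormedAddCommGroup F] [NormedSpace ℝ F]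
    (g : E ≃ₗᵢ[ℝ] E') (h : E' → F) (x : E) : Δ (h ∘ g) x = Δ h (g x) := by
  have hcomp : iteratedFDeriv ℝ 2 (h ∘ g) x =
      (iteratedFDeriv ℝ 2 h (g x)).compContinuousLinearMap fun _ => (g : E →L[ℝ] E') := by
    rw [← iteratedFDerivWithin_univ, ← iteratedFDerivWithin_univ]
    exact g.toContinuousLinearEquiv.iteratedFDerivWithin_comp_right h uniqueDiffOn_univ
      (mem_univ _) 2
  rw [laplacian_eq_iteratedFDeriv_orthonormalBasis (h ∘ g) (stdOrthonormalBasis ℝ E),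
    laplacian_eq_iteratedFDeriv_orthonormalBasis h ((stdOrthonormalBasis ℝ E).map g)]
  simp only [hcomp, ContinuousMultilinearMap.compContinuousLinearMap_apply,
    OrthonormalBasis.map_apply]
  refine Finset.sum_congr rfl fun i _ => congrArg _ ?_
  ext j
  fin_cases j <;> rfl

theorem euclideanLaplacian_eq_laplacian (h : EuclideanSpace ℝ (Fin 2) → ℝ) :
    euclideanLaplacian h = Δ h := by
  rw [laplacian_eq_iteratedFDeriv_orthonormalBasis h (EuclideanSpace.basisFun (Fin 2) ℝ)]
  ext x
  simp [euclideanLaplacian]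

theorem norm_fderiv_comp_linearIsometryEquiv {E E' F : Type*} [NormedAddCommGroup E]
    [NormedSpace ℝ E] [NormedAddCommGroup E'] [NormedSpace ℝ E'] [NormedAddCommGroup F]
    [NormedSpace ℝ F] (g : E ≃ₗᵢ[ℝ] E') (h : E' → F) (x : E) :
    ‖fderiv ℝ (h ∘ g) x‖ = ‖fderiv ℝ h (g x)‖ := by
  have : fderiv ℝ (h ∘ g) x = (fderiv ℝ h (g x)).comp (g : E →L[ℝ] E') :=
    g.toContinuousLinearEquiv.comp_right_fderiv
  rw [this]
  exact (fderiv ℝ h (g x)).opNorm_comp_linearIsometryEquiv g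

theorem norm_gradient {E : Type*} [NormedAddCommGroup E] [InnerProductSpace ℝ E]
    [CompleteSpace E] (h : E → ℝ) (x : E) : ‖gradient h x‖ = ‖fderiv ℝ h x‖ := by
  rw [← toDual_gradient, LinearIsometryEquiv.norm_map]

theorem ContDiff.hasFDerivAt_fderiv {E F : Type*} [NormedAddCommGroup E] [NormedSpace ℝ E]
    [NormedAddCommGroup F] [NormedSpace ℝ F] {f : E → F} (hf : ContDiff ℝ 2 f) (x : E) :
    HasFDerivAt (fderiv ℝ f) (fderiv ℝ (fderiv ℝ f) x) x :=
  ((hf.fderiv_right (m := 1) le_rfl).differentiable one_ne_zero x).hasFDerivAt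

namespace PolarFlux

variable {F : Type*} [NormedAddCommGroup F] [NormedSpace ℝ F] {f : ℂ → F}

noncomputable def radial (f : ℂ → F) (p : ℝ × ℝ) : F :=
  p.1 • fderiv ℝ f (circleMap 0 p.1 p.2) (circleMap 0 1 p.2)

/-- `r⁻¹ ∂_θ f` at `(r, θ)`, written without the division by `r` so that it is `C¹` up to
`r = 0`. -/
noncomputable def angular (f : ℂ → F) (p : ℝ × ℝ) : F :=
  fderiv ℝ f (circleMap 0 p.1 p.2) (circleMap 0 1 p.2 * I)

theorem contDiff_radial (hf : ContDiff ℝ 2 f) : ContDiff ℝ 1 (radial f) :=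
  contDiff_fst.smul (((hf.fderiv_right le_rfl).comp (contDiff_circleMap_uncurry 0)).clm_apply
    ((contDiff_circleMap_uncurry 0).comp (contDiff_const.prodMk contDiff_snd)))

theorem contDiff_angular (hf : ContDiff ℝ 2 f) : ContDiff ℝ 1 (angular f) :=
  ((hf.fderiv_right le_rfl).comp (contDiff_circleMap_uncurry 0)).clm_apply
    (((contDiff_circleMap_uncurry 0).comp (contDiff_const.prodMk contDiff_snd)).mul
      contDiff_const)

theorem hasDerivAt_radial (hf : ContDiff ℝ 2 f) (r θ : ℝ) :
    HasDerivAt (fun r => radial f (r, θ))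
      (fderiv ℝ f (circleMap 0 r θ) (circleMap 0 1 θ) +
        r • fderiv ℝ (fderiv ℝ f) (circleMap 0 r θ) (circleMap 0 1 θ) (circleMap 0 1 θ)) r := by
  have hDP := (hf.hasFDerivAt_fderiv _).comp_hasDerivAt r (hasDerivAt_circleMap_radius 0 r θ)
    |>.clm_apply (hasDerivAt_const r (circleMap 0 1 θ))
  refine ((hasDerivAt_id r).smul hDP).congr_deriv ?_
  simp only [id, one_smul, map_zero, add_zero]
  exact add_comm _ _

theorem hasDerivAt_angular (hf : ContDiff ℝ 2 f) (r θ : ℝ) :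
    HasDerivAt (fun θ => angular f (r, θ))
      (r • fderiv ℝ (fderiv ℝ f) (circleMap 0 r θ) (circleMap 0 1 θ * I) (circleMap 0 1 θ * I) -
        fderiv ℝ f (circleMap 0 r θ) (circleMap 0 1 θ)) θ := by
  have hDP := ((hf.hasFDerivAt_fderiv _).comp_hasDerivAt θ (hasDerivAt_circleMap 0 r θ)).clm_apply
    ((hasDerivAt_circleMap 0 1 θ).mul_const I)
  have hP : circleMap 0 r θ * I = (r : ℝ) • (circleMap 0 1 θ * I) := by
    simp only [circleMap, zero_add, real_smul, ofReal_one, one_mul]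
    ring
  have hω : circleMap 0 1 θ * I * I = -circleMap 0 1 θ := by
    rw [mul_assoc, I_mul_I, mul_neg_one]
  refine hDP.congr_deriv ?_
  simp only [Function.comp_apply, hP, hω, map_smul, map_neg, FunLike.coe_smul, Pi.smul_apply]
  exact (sub_eq_add_neg _ _).symm

theorem fderiv_radial_add_fderiv_angular (hf : ContDiff ℝ 2 f) (p : ℝ × ℝ) :
    fderiv ℝ (radial f) p (1, 0) + fderiv ℝ (angular f) p (0, 1) =
      p.1 • Δ f (circleMap 0 p.1 p.2) := by
  have hω : ((Circle.exp p.2 : Circle) : ℂ) = circleMap 0 1 p.2 := by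
    simp [circleMap, Circle.coe_exp]
  rw [fderiv_apply_one_zero ((contDiff_radial hf).differentiable one_ne_zero p)
      (hasDerivAt_radial hf p.1 p.2),
    fderiv_apply_zero_one ((contDiff_angular hf).differentiable one_ne_zero p)
      (hasDerivAt_angular hf p.1 p.2),
    laplacian_eq_fderiv_fderiv_rotation f (Circle.exp p.2), hω, smul_add]
  abel

theorem integral_Icc_smul_laplacian_circleMap [CompleteSpace F] (hf : ContDiff ℝ 2 f)
    {t : ℝ} (ht : 0 ≤ t) :
    ∫ p in Icc (0, -π) (t, π), p.1 • Δ f (circleMap 0 p.1 p.2) =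
      ∫ θ in -π..π, t • fderiv ℝ f (circleMap 0 t θ) (circleMap 0 1 θ) := by
  have hdiff : ∀ {g : ℝ × ℝ → F}, ContDiff ℝ 1 g → ∀ p, HasFDerivAt g (fderiv ℝ g p) p :=
    fun hg p => (hg.differentiable one_ne_zero p).hasFDerivAt
  have hcont : ∀ {g : ℝ × ℝ → F}, ContDiff ℝ 1 g → ∀ v, Continuous fun p => fderiv ℝ g p v :=
    fun hg v => (hg.continuous_fderiv one_ne_zero).clm_apply continuous_const
  have hdiv := integral_divergence_prod_Icc_of_hasFDerivAt_off_countable_of_le (radial f)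
    (angular f) (fderiv ℝ (radial f)) (fderiv ℝ (angular f)) (0, -π) (t, π)
    ⟨ht, by linarith [pi_pos]⟩ ∅ countable_empty (contDiff_radial hf).continuous.continuousOn
    (contDiff_angular hf).continuous.continuousOn
    (fun p _ => hdiff (contDiff_radial hf) p) (fun p _ => hdiff (contDiff_angular hf) p)
    (((hcont (contDiff_radial hf) _).add
      (hcont (contDiff_angular hf) _)).continuousOn.integrableOn_compact isCompact_Icc)
  simp only [fderiv_radial_add_fderiv_angular hf] at hdiv
  have hperiod : ∀ r, circleMap 0 r π = circleMap 0 r (-π) := fun r => by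
    convert periodic_circleMap 0 r (-π) using 2
    ring
  simp only [hdiv, angular, hperiod, sub_self, zero_add, radial, zero_smul,
    intervalIntegral.integral_zero, sub_zero]

end PolarFlux

theorem integral_laplacian_closedBall_le_integral_norm_fderiv_sphere {f : ℂ → ℝ}
    (hf : ContDiff ℝ 2 f) {t : ℝ} (ht : 0 < t) :
    ∫ z in closedBall (0 : ℂ) t, Δ f z ≤ ∫ z in sphere (0 : ℂ) t, ‖fderiv ℝ f z‖ ∂μH[1] := by
  have hDf : Continuous (fderiv ℝ f) := hf.continuous_fderiv two_ne_zero
  have hpi : -π ≤ π := neg_le_self pi_pos.le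
  have hradial : ∀ θ, fderiv ℝ f (circleMap 0 t θ) (circleMap 0 1 θ) ≤
      ‖fderiv ℝ f (circleMap 0 t θ)‖ := fun θ => by
    simpa [norm_circleMap_zero] using
      (le_abs_self _).trans ((fderiv ℝ f (circleMap 0 t θ)).le_opNorm (circleMap 0 1 θ))
  calc ∫ z in closedBall (0 : ℂ) t, Δ f z
      = ∫ p in Icc (0, -π) (t, π), p.1 • Δ f (circleMap 0 p.1 p.2) :=
        integral_closedBall_eq_integral_Icc_circleMap _ t
    _ = ∫ θ in -π..π, t * fderiv ℝ f (circleMap 0 t θ) (circleMap 0 1 θ) :=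
        PolarFlux.integral_Icc_smul_laplacian_circleMap hf ht.le
    _ ≤ ∫ θ in -π..π, t * ‖fderiv ℝ f (circleMap 0 t θ)‖ := by
        exact intervalIntegral.integral_mono_on hpi
          (Continuous.intervalIntegrable (by fun_prop) _ _)
          (Continuous.intervalIntegrable (by fun_prop) _ _)
          fun θ _ => mul_le_mul_of_nonneg_left (hradial θ) ht.le
    _ = t * ∫ θ in Ioc (-π) π, ‖fderiv ℝ f (circleMap 0 t θ)‖ := by
        rw [intervalIntegral.integral_const_mul, intervalIntegral.integral_of_le hpi]
    _ ≤ ∫ z in sphere (0 : ℂ) t, ‖fderiv ℝ f z‖ ∂μH[1] :=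
        mul_integral_comp_circleMap_le_integral_sphere 0 ht hDf.norm fun _ => norm_nonneg _

/-- For a `C²` function `h : ℝ² → ℝ` and `t > 0`, the integral of `Δh` over the
closed ball of radius `t` about the origin is at most the integral of `‖∇h‖`
over the circle of radius `t` about the origin, with respect to the
one-dimensional Hausdorff measure. -/
theorem integral_laplacian_closedBall_le_integral_grad_sphere
    (h : EuclideanSpace ℝ (Fin 2) → ℝ) (hsmooth : ContDiff ℝ 2 h)
    (t : ℝ) (ht : 0 < t) :
    ∫ x in Metric.closedBall (0 : EuclideanSpace ℝ (Fin 2)) t, euclideanLaplacian h x ≤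
      ∫ x in Metric.sphere (0 : EuclideanSpace ℝ (Fin 2)) t, ‖gradient h x‖
        ∂(Measure.hausdorffMeasure 1) := by
  set e := Complex.orthonormalBasisOneI.repr
  have hball : ∫ z in e ⁻¹' closedBall 0 t, euclideanLaplacian h (e z) =
      ∫ x in closedBall 0 t, euclideanLaplacian h x :=
    e.measurePreserving.setIntegral_preimage_emb e.toMeasurableEquiv.measurableEmbedding _ _
  have hsphere : ∫ z in e ⁻¹' sphere 0 t, ‖gradient h (e z)‖ ∂μH[1] =
      ∫ x in sphere 0 t, ‖gradient h x‖ ∂μH[1] :=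
    (e.toIsometryEquiv.measurePreserving_hausdorffMeasure 1).setIntegral_preimage_emb
      e.toMeasurableEquiv.measurableEmbedding (fun x => ‖gradient h x‖) _
  rw [← hball, ← hsphere, e.preimage_closedBall, e.preimage_sphere, map_zero]
  simp only [euclideanLaplacian_eq_laplacian, norm_gradient,
    ← laplacian_comp_linearIsometryEquiv, ← norm_fderiv_comp_linearIsometryEquiv]
  exact integral_laplacian_closedBall_le_integral_norm_fderiv_sphere (hsmooth.comp e.contDiff) ht
end
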